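/- Let μ, ν, γ be discrete probability measures on finite metric spaces with fixed roots r_x, r_y, r_z respectively. Then the aligned-root FlowAlign discrepancy satisfies the triangle inequality: Â_f(μ,γ; r_x,r_y) ≤ Â_f(μ,ν; r_x,r_z) + Â_f(ν,γ; r_y,r_z). -/

import Mathlib

open Finset

noncomputable section

/-- The set of couplings (transport plans) between two finite weight vectors. -/
def couplings {k k' : ℕ} (a : Fin k → ℝ) (b : Fin k' → ℝ) : Set (Fin k → Fin k' → ℝ) :=
  {T | (∀ i j, 0 ≤ T i j) ∧ (∀ i, ∑ j, T i j = a i) ∧ (∀ j, ∑ i, T i j = b j)}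

/-- Optimal transport cost between weight vectors `a`, `b` for a cost matrix `c`. -/
def otCost {k k' : ℕ} (c : Fin k → Fin k' → ℝ) (a : Fin k → ℝ) (b : Fin k' → ℝ) : ℝ :=
  sInf {v | ∃ T ∈ couplings a b, v = ∑ i, ∑ j, c i j * T i j}

/-- Squared aligned-root FlowAlign discrepancy. -/
def flowAlignSq {TX TZ : Type*} [MetricSpace TX] [MetricSpace TZ] {k k' : ℕ}
    (a : Fin k → ℝ) (b : Fin k' → ℝ) (x : Fin k → TX) (z : Fin k' → TZ)
    (rx : TX) (rz : TZ) : ℝ :=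
  otCost (fun i j => (dist rx (x i) - dist rz (z j)) ^ 2) a b

/-- Aligned-root FlowAlign discrepancy `Â_f`. -/
def alignedFlowAlign {TX TZ : Type*} [MetricSpace TX] [MetricSpace TZ] {k k' : ℕ}
    (a : Fin k → ℝ) (b : Fin k' → ℝ) (x : Fin k → TX) (z : Fin k' → TZ)
    (rx : TX) (rz : TZ) : ℝ :=
  Real.sqrt (flowAlignSq a b x z rx rz)

/-! The cost `(d(r_x, x_i) - d(r_z, z_j))²` is `|u_i - v_j|²` for the root distances `u`, `v`,
so `Â_f` is the 2-Wasserstein distance on `ℝ` between the images of the weights under the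
distance to the root, and the claim is the triangle inequality for `W₂` between discrete
measures in a pseudometric space. Optimal plans exist because the transport polytope is
compact. Gluing optimal plans `T₁` for `(a, b)` and `T₂` for `(b, c)` along `b` gives a plan
for `(a, c)`; the triangle inequality for `d` and Minkowski's inequality in `L²` of the glued
plan bound its cost by `(√cost T₁ + √cost T₂)²`. -/

theorem sqrt_sum_mul_add_sq_le {ι : Type*} [Fintype ι] {w : ι → ℝ} (hw : ∀ i, 0 ≤ w i)
    (f g : ι → ℝ) :
    √(∑ i, w i * (f i + g i) ^ 2) ≤ √(∑ i, w i * f i ^ 2) + √(∑ i, w i * g i ^ 2) := by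
  have hweight (h : ι → ℝ) : ∑ i, w i * h i ^ 2 = ∑ i, (√(w i) * h i) ^ 2 := by
    simp only [mul_pow, Real.sq_sqrt (hw _)]
  have minkowski := norm_add_le (WithLp.toLp 2 (fun i => √(w i) * f i) : EuclideanSpace ℝ ι)
    (WithLp.toLp 2 (fun i => √(w i) * g i))
  simpa only [hweight, mul_add, EuclideanSpace.norm_eq, ← WithLp.toLp_add, PiLp.toLp_apply,
    Pi.add_apply, Real.norm_eq_abs, sq_abs] using minkowski

section Couplings

variable {k l : ℕ} {a : Fin k → ℝ} {b : Fin l → ℝ}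

theorem mem_couplings_prod (ha : ∀ i, 0 ≤ a i) (hb : ∀ j, 0 ≤ b j) (ha1 : ∑ i, a i = 1)
    (hb1 : ∑ j, b j = 1) : (fun i j => a i * b j) ∈ couplings a b :=
  ⟨fun i j => mul_nonneg (ha i) (hb j), fun i => by rw [← mul_sum, hb1, mul_one],
    fun j => by rw [← sum_mul, ha1, one_mul]⟩

theorem isCompact_couplings (a : Fin k → ℝ) (b : Fin l → ℝ) : IsCompact (couplings a b) := by
  refine (isCompact_Icc : IsCompact (Set.Icc (0 : Fin k → Fin l → ℝ) fun i _ => a i))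
    |>.of_isClosed_subset ?_ ?_
  · simp only [couplings, Set.ofPred_and, Set.ofPred_forall]
    refine .inter (isClosed_iInter fun i => isClosed_iInter fun j =>
      isClosed_le continuous_const (by fun_prop)) (.inter ?_ ?_)
    · exact isClosed_iInter fun i => isClosed_eq (by fun_prop) continuous_const
    · exact isClosed_iInter fun j => isClosed_eq (by fun_prop) continuous_const
  · rintro T ⟨hT0, hTa, -⟩
    exact ⟨hT0, fun i j => (single_le_sum (fun j _ => hT0 i j) (mem_univ j)).trans_eq (hTa i)⟩

theorem eq_zero_of_mem_couplings_of_right_eq_zero {T : Fin k → Fin l → ℝ}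
    (hT : T ∈ couplings a b) {j : Fin l} (hj : b j = 0) (i : Fin k) : T i j = 0 :=
  (sum_eq_zero_iff_of_nonneg fun i _ => hT.1 i j).1 ((hT.2.2 j).trans hj) i (mem_univ i)

theorem eq_zero_of_mem_couplings_of_left_eq_zero {T : Fin k → Fin l → ℝ}
    (hT : T ∈ couplings a b) {i : Fin k} (hi : a i = 0) (j : Fin l) : T i j = 0 :=
  (sum_eq_zero_iff_of_nonneg fun j _ => hT.1 i j).1 ((hT.2.1 i).trans hi) j (mem_univ j)

end Couplings

section OptimalPlans

variable {k l : ℕ} {a : Fin k → ℝ} {b : Fin l → ℝ} (cost : Fin k → Fin l → ℝ)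

def planCost (T : Fin k → Fin l → ℝ) : ℝ :=
  ∑ i, ∑ j, cost i j * T i j

theorem otCost_eq_sInf_image : otCost cost a b = sInf (planCost cost '' couplings a b) := by
  simp only [otCost, planCost, Set.image, eq_comm]

theorem exists_isMinOn_planCost (h : (couplings a b).Nonempty) :
    ∃ T ∈ couplings a b, IsMinOn (planCost cost) (couplings a b) T :=
  (isCompact_couplings a b).exists_isMinOn h (by unfold planCost; fun_prop)

variable {cost}

theorem otCost_eq_planCost_of_isMinOn {T : Fin k → Fin l → ℝ} (hT : T ∈ couplings a b)
    (hmin : IsMinOn (planCost cost) (couplings a b) T) : otCost cost a b = planCost cost T := by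
  rw [otCost_eq_sInf_image]
  exact IsLeast.csInf_eq ⟨Set.mem_image_of_mem _ hT, Set.forall_mem_image.2 hmin⟩

theorem otCost_le_planCost {T : Fin k → Fin l → ℝ} (hT : T ∈ couplings a b) :
    otCost cost a b ≤ planCost cost T := by
  obtain ⟨T₀, hT₀, hmin⟩ := exists_isMinOn_planCost cost ⟨T, hT⟩
  rw [otCost_eq_planCost_of_isMinOn hT₀ hmin]
  exact hmin hT

end OptimalPlans

section Gluing

variable {k l m : ℕ} {a : Fin k → ℝ} {b : Fin l → ℝ} {c : Fin m → ℝ}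
  {T₁ : Fin k → Fin l → ℝ} {T₂ : Fin l → Fin m → ℝ}

/-- Where `b j = 0` both plans vanish on `j`, and the junk value `x / 0 = 0` is the right one. -/
def gluedPlan (b : Fin l → ℝ) (T₁ : Fin k → Fin l → ℝ) (T₂ : Fin l → Fin m → ℝ)
    (i : Fin k) (j : Fin l) (j' : Fin m) : ℝ :=
  T₁ i j * T₂ j j' / b j

theorem gluedPlan_nonneg (hT₁ : T₁ ∈ couplings a b) (hT₂ : T₂ ∈ couplings b c)
    (i : Fin k) (j : Fin l) (j' : Fin m) : 0 ≤ gluedPlan b T₁ T₂ i j j' :=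
  div_nonneg (mul_nonneg (hT₁.1 i j) (hT₂.1 j j'))
    (hT₁.2.2 j ▸ sum_nonneg fun i _ => hT₁.1 i j)

theorem sum_gluedPlan_right (hT₁ : T₁ ∈ couplings a b) (hT₂ : T₂ ∈ couplings b c)
    (i : Fin k) (j : Fin l) : ∑ j', gluedPlan b T₁ T₂ i j j' = T₁ i j := by
  rcases eq_or_ne (b j) 0 with hj | hj
  · simp [gluedPlan, hj, eq_zero_of_mem_couplings_of_right_eq_zero hT₁ hj]
  · simp only [gluedPlan, ← sum_div, ← mul_sum, hT₂.2.1 j, mul_div_cancel_right₀ _ hj]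

theorem sum_gluedPlan_left (hT₁ : T₁ ∈ couplings a b) (hT₂ : T₂ ∈ couplings b c)
    (j : Fin l) (j' : Fin m) : ∑ i, gluedPlan b T₁ T₂ i j j' = T₂ j j' := by
  rcases eq_or_ne (b j) 0 with hj | hj
  · simp [gluedPlan, hj, eq_zero_of_mem_couplings_of_left_eq_zero hT₂ hj]
  · simp only [gluedPlan, ← sum_div, ← sum_mul, hT₁.2.2 j, mul_div_cancel_left₀ _ hj]

theorem sum_gluedPlan_mem_couplings (hT₁ : T₁ ∈ couplings a b) (hT₂ : T₂ ∈ couplings b c) :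
    (fun i j' => ∑ j, gluedPlan b T₁ T₂ i j j') ∈ couplings a c := by
  refine ⟨fun i j' => sum_nonneg fun j _ => gluedPlan_nonneg hT₁ hT₂ i j j', fun i => ?_,
    fun j' => ?_⟩
  · simp only [sum_comm (γ := Fin m), sum_gluedPlan_right hT₁ hT₂, hT₁.2.1 i]
  · simp only [sum_comm (γ := Fin k), sum_gluedPlan_left hT₁ hT₂, hT₂.2.2 j']

theorem sqrt_planCost_gluedPlan_le {E : Type*} [PseudoMetricSpace E] (p : Fin k → E)
    (q : Fin l → E) (r : Fin m → E) (hT₁ : T₁ ∈ couplings a b) (hT₂ : T₂ ∈ couplings b c) :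
    √(planCost (fun i j' => dist (p i) (r j') ^ 2) fun i j' => ∑ j, gluedPlan b T₁ T₂ i j j')
      ≤ √(planCost (fun i j => dist (p i) (q j) ^ 2) T₁)
        + √(planCost (fun j j' => dist (q j) (r j') ^ 2) T₂) := by
  set P : Fin k × Fin l × Fin m → ℝ := fun t => gluedPlan b T₁ T₂ t.1 t.2.1 t.2.2
  have hP (t : Fin k × Fin l × Fin m) : 0 ≤ P t := gluedPlan_nonneg hT₁ hT₂ _ _ _
  have h₁₃ : planCost (fun i j' => dist (p i) (r j') ^ 2)
      (fun i j' => ∑ j, gluedPlan b T₁ T₂ i j j') = ∑ t, P t * dist (p t.1) (r t.2.2) ^ 2 := by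
    simp only [planCost, Fintype.sum_prod_type, mul_sum, P]
    refine sum_congr rfl fun i _ => ?_
    rw [sum_comm]
    exact sum_congr rfl fun _ _ => sum_congr rfl fun _ _ => mul_comm _ _
  have h₁₂ : ∑ t, P t * dist (p t.1) (q t.2.1) ^ 2
      = planCost (fun i j => dist (p i) (q j) ^ 2) T₁ := by
    simp only [planCost, Fintype.sum_prod_type, ← sum_mul, P, sum_gluedPlan_right hT₁ hT₂,
      mul_comm]
  have h₂₃ : ∑ t, P t * dist (q t.2.1) (r t.2.2) ^ 2
      = planCost (fun j j' => dist (q j) (r j') ^ 2) T₂ := by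
    simp only [planCost, Fintype.sum_prod_type, P]
    rw [sum_comm]
    refine sum_congr rfl fun j _ => ?_
    rw [sum_comm]
    simp only [← sum_mul, sum_gluedPlan_left hT₁ hT₂, mul_comm]
  calc _ = √(∑ t, P t * dist (p t.1) (r t.2.2) ^ 2) := by rw [h₁₃]
    _ ≤ √(∑ t, P t * (dist (p t.1) (q t.2.1) + dist (q t.2.1) (r t.2.2)) ^ 2) :=
      Real.sqrt_le_sqrt <| sum_le_sum fun t _ => mul_le_mul_of_nonneg_left
        (pow_le_pow_left₀ dist_nonneg (dist_triangle _ _ _) 2) (hP t)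
    _ ≤ √(∑ t, P t * dist (p t.1) (q t.2.1) ^ 2) + √(∑ t, P t * dist (q t.2.1) (r t.2.2) ^ 2) :=
      sqrt_sum_mul_add_sq_le hP _ _
    _ = _ := by rw [h₁₂, h₂₃]

theorem sqrt_otCost_dist_sq_le_add {E : Type*} [PseudoMetricSpace E] (p : Fin k → E)
    (q : Fin l → E) (r : Fin m → E) (hab : (couplings a b).Nonempty)
    (hbc : (couplings b c).Nonempty) :
    √(otCost (fun i j' => dist (p i) (r j') ^ 2) a c)
      ≤ √(otCost (fun i j => dist (p i) (q j) ^ 2) a b)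
        + √(otCost (fun j j' => dist (q j) (r j') ^ 2) b c) := by
  obtain ⟨T₁, hT₁, hmin₁⟩ := exists_isMinOn_planCost (fun i j => dist (p i) (q j) ^ 2) hab
  obtain ⟨T₂, hT₂, hmin₂⟩ := exists_isMinOn_planCost (fun j j' => dist (q j) (r j') ^ 2) hbc
  rw [otCost_eq_planCost_of_isMinOn hT₁ hmin₁, otCost_eq_planCost_of_isMinOn hT₂ hmin₂]
  exact (Real.sqrt_le_sqrt (otCost_le_planCost (sum_gluedPlan_mem_couplings hT₁ hT₂))).trans
    (sqrt_planCost_gluedPlan_le p q r hT₁ hT₂)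

end Gluing

theorem flowAlignSq_eq_otCost_dist {TX TZ : Type*} [MetricSpace TX] [MetricSpace TZ] {k l : ℕ}
    (a : Fin k → ℝ) (b : Fin l → ℝ) (x : Fin k → TX) (z : Fin l → TZ) (rx : TX) (rz : TZ) :
    flowAlignSq a b x z rx rz
      = otCost (fun i j => dist (dist rx (x i)) (dist rz (z j)) ^ 2) a b := by
  simp only [flowAlignSq, Real.dist_eq, sq_abs]

theorem stmt_2_general {TX TY TZ : Type*} [MetricSpace TX] [MetricSpace TY] [MetricSpace TZ]
    {k l m : ℕ}
    (a : Fin k → ℝ) (b : Fin l → ℝ) (c : Fin m → ℝ)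
    (x : Fin k → TX) (z : Fin l → TZ) (y : Fin m → TY)
    (rx : TX) (rz : TZ) (ry : TY)
    (ha : ∀ i, 0 ≤ a i) (hb : ∀ j, 0 ≤ b j) (hc : ∀ j, 0 ≤ c j)
    (ha1 : ∑ i, a i = 1) (hb1 : ∑ j, b j = 1) (hc1 : ∑ j, c j = 1) :
    alignedFlowAlign a c x y rx ry
      ≤ alignedFlowAlign a b x z rx rz + alignedFlowAlign b c z y rz ry := by
  simp only [alignedFlowAlign, flowAlignSq_eq_otCost_dist]
  exact sqrt_otCost_dist_sq_le_add _ (fun j => dist rz (z j)) _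
    ⟨_, mem_couplings_prod ha hb ha1 hb1⟩ ⟨_, mem_couplings_prod hb hc hb1 hc1⟩

/-- Triangle inequality for the aligned-root FlowAlign discrepancy:
`Â_f(μ,γ;r_x,r_y) ≤ Â_f(μ,ν;r_x,r_z) + Â_f(ν,γ;r_y,r_z)` for discrete probability
measures `μ` on `TX` (root `rx`), `ν` on `TZ` (root `rz`), `γ` on `TY` (root `ry`). -/
theorem stmt_2 {TX TY TZ : Type*} [MetricSpace TX] [MetricSpace TY] [MetricSpace TZ]
    [Fintype TX] [Fintype TY] [Fintype TZ]
    {k l m : ℕ}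
    (a : Fin k → ℝ) (b : Fin l → ℝ) (c : Fin m → ℝ)
    (x : Fin k → TX) (z : Fin l → TZ) (y : Fin m → TY)
    (rx : TX) (rz : TZ) (ry : TY)
    (ha : ∀ i, 0 ≤ a i) (hb : ∀ j, 0 ≤ b j) (hc : ∀ j, 0 ≤ c j)
    (ha1 : ∑ i, a i = 1) (hb1 : ∑ j, b j = 1) (hc1 : ∑ j, c j = 1) :
    alignedFlowAlign a c x y rx ry
      ≤ alignedFlowAlign a b x z rx rz + alignedFlowAlign b c z y rz ry :=
  stmt_2_general a b c x z y rx rz ry ha hb hc ha1 hb1 hc1
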